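/- arXiv:1801.05376 — 2 statements merged into one kernel-verified Lean document; each statement's English description precedes it below -/
import Mathlib

section
/- Let u be an infinite overlap-free binary word and k ≥ 0 an integer. If the word r_k, or its complement, occurs in u at position i (that is, u = x r_k ⋯ or u = x r̄_k ⋯ with |x| = i), then i ≤ 2^k − 1. In particular, the words r_k and its complement have, in total, at most one occurrence in u. -/
/-- The factor of the infinite word `u` of length `m` starting at position `i`. -/
def factorAt {k : ℕ} (u : ℕ → Fin k) (i m : ℕ) : List (Fin k) :=
  (List.range m).map fun j => u (i + j)

/-- `v` is a factor of the infinite word `u`. -/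
def IsFactor {k : ℕ} (v : List (Fin k)) (u : ℕ → Fin k) : Prop :=
  ∃ i, v = factorAt u i v.length

/-- Subword complexity: the number of distinct factors of length `n`. -/
noncomputable def complexity {k : ℕ} (u : ℕ → Fin k) (n : ℕ) : ℕ :=
  Set.ncard {v : List (Fin k) | v.length = n ∧ IsFactor v u}

/-- The word `w` has period `q` (`1 ≤ q ≤ |w|`, and `w(i) = w(i+q)` whenever defined). -/
def HasPer {A : Type*} (w : List A) (q : ℕ) : Prop :=
  1 ≤ q ∧ q ≤ w.length ∧ ∀ i, i + q < w.length → w[i]? = w[i + q]?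

/-- The minimal period of a finite word. -/
noncomputable def minPer {A : Type*} (w : List A) : ℕ := sInf {q | HasPer w q}

/-- The exponent of a finite word: its length divided by its minimal period. -/
noncomputable def exponent {A : Type*} (w : List A) : ℝ := (w.length : ℝ) / (minPer w : ℝ)

/-- `u` is `α`-power-free: no nonempty factor has exponent `≥ α`. -/
def PowerFree {k : ℕ} (α : ℝ) (u : ℕ → Fin k) : Prop :=
  ∀ v : List (Fin k), v ≠ [] → IsFactor v u → exponent v < α

/-- `u` is `α⁺`-power-free: no nonempty factor has exponent `> α`. -/
def PowerFreePlus {k : ℕ} (α : ℝ) (u : ℕ → Fin k) : Prop :=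
  ∀ v : List (Fin k), v ≠ [] → IsFactor v u → exponent v ≤ α

/-- Overlap-free means `2⁺`-power-free. -/
def OverlapFree {k : ℕ} (u : ℕ → Fin k) : Prop := PowerFreePlus 2 u

/-- The Thue–Morse word: `t n` is the number of 1's, mod 2, in the binary expansion of `n`. -/
def thueMorse : ℕ → Fin 2 := fun n => Fin.ofNat 2 ((Nat.digits 2 n).count 1)

/-- The Thue–Morse morphism μ: 0 → 01, 1 → 10. -/
def mu (w : List (Fin 2)) : List (Fin 2) :=
  w.flatMap fun a => if a = 0 then [0, 1] else [1, 0]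

/-- `aK k` is the last letter of `μ^k(0)`. -/
def aK (k : ℕ) : Fin 2 := ((mu^[k]) [0]).getLastD 0

/-- The word `r_k = a_k μ^k(010) 0`. -/
def rK (k : ℕ) : List (Fin 2) := aK k :: ((mu^[k]) [0, 1, 0] ++ [0])

/-- The complement of a binary word (flip every letter). -/
def compl (w : List (Fin 2)) : List (Fin 2) := w.map fun a => 1 - a

/-!
An overlap-free binary word containing a square of a letter `aa` is, after a prefix of length
`c ≤ 2`, the image `μ(v)` of an overlap-free word `v`, and `c = 2` only for words beginning with
`aabaa`. An occurrence of `r_{k+1}` at `i` has a square of a letter at offset `2`, so it is aligned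
with the `μ`-blocks and comes from an occurrence of `r_k` in `v` at a position `j` with
`i = c + 2 j + 1`. Since `r_0 = 00100` can only occur as a prefix, induction on `k` gives
`i ≤ 2^k - 1`. To rule out `c > 0` when `j = 2^k - 1`, the induction also records that a word with
an occurrence at the extreme position `2^k - 1` begins with squares `xx`, `x` ending in either
letter: the letter `a` before `μ(v)` would turn `μ(x)μ(x)` with `μ(x)` ending in `a` into the
overlap `aμ(x)μ(x)`. Finally, two occurrences at distance `d < 2^k` overlap with period `d`, or,
for `r_k` against its complement, with period `2^k - d`, because `μ^k(010) = X X̄ X`.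
-/

open Fin.NatCast

theorem thueMorse_zero : thueMorse 0 = 0 := by simp [thueMorse]

theorem thueMorse_two_mul (n : ℕ) : thueMorse (2 * n) = thueMorse n := by
  rcases Nat.eq_zero_or_pos n with rfl | hn
  · rfl
  · rw [thueMorse, Nat.digits_def' (by norm_num) (by omega)]
    simp [thueMorse]

theorem thueMorse_two_mul_add_one (n : ℕ) : thueMorse (2 * n + 1) = thueMorse n + 1 := by
  rw [thueMorse, Nat.digits_def' (by norm_num) (by omega)]
  simp [thueMorse, Nat.mul_add_div]

theorem thueMorse_one : thueMorse 1 = 1 := by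
  simpa [thueMorse_zero] using thueMorse_two_mul_add_one 0

theorem thueMorse_two_pow_sub_one (k : ℕ) : thueMorse (2 ^ k - 1) = k := by
  induction k with
  | zero => exact thueMorse_zero
  | succ k ih =>
    have h : 2 ^ (k + 1) - 1 = 2 * (2 ^ k - 1) + 1 := by
      have := Nat.one_le_two_pow (n := k)
      rw [pow_succ]
      omega
    rw [h, thueMorse_two_mul_add_one, ih]
    push_cast
    rfl

theorem mu_cons (a : Fin 2) (w : List (Fin 2)) : mu (a :: w) = a :: (a + 1) :: mu w := by
  fin_cases a <;> rfl

theorem length_mu (w : List (Fin 2)) : (mu w).length = 2 * w.length := by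
  induction w with
  | nil => rfl
  | cons a w ih => simp [mu_cons, ih]; ring

theorem length_mu_iterate (k : ℕ) (w : List (Fin 2)) :
    ((mu^[k]) w).length = w.length * 2 ^ k := by
  induction k with
  | zero => simp
  | succ k ih => rw [Function.iterate_succ_apply', length_mu, ih, pow_succ]; ring

theorem getElem?_mu_two_mul (w : List (Fin 2)) (n : ℕ) : (mu w)[2 * n]? = w[n]? := by
  induction w generalizing n with
  | nil => rfl
  | cons a w ih => rcases n with _ | n <;> simp [mu_cons, Nat.mul_succ, ih]

theorem getElem?_mu_two_mul_add_one (w : List (Fin 2)) (n : ℕ) :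
    (mu w)[2 * n + 1]? = w[n]?.map (· + 1) := by
  induction w generalizing n with
  | nil => rfl
  | cons a w ih => rcases n with _ | n <;> simp [mu_cons, Nat.mul_succ, ih]

theorem getElem?_mu_iterate (k : ℕ) (w : List (Fin 2)) (x : ℕ) :
    ((mu^[k]) w)[x]? = w[x / 2 ^ k]?.map (· + thueMorse (x % 2 ^ k)) := by
  induction k generalizing x with
  | zero => simp [Nat.mod_one, thueMorse_zero]
  | succ k ih =>
    rw [Function.iterate_succ_apply', pow_succ', ← Nat.div_div_eq_div_mul, Nat.mod_mul]
    obtain ⟨n, rfl | rfl⟩ := Nat.even_or_odd' x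
    · simp [getElem?_mu_two_mul, ih, thueMorse_two_mul]
    · rw [show (2 * n + 1) / 2 = n by omega, show (2 * n + 1) % 2 = 1 by omega, add_comm 1,
        thueMorse_two_mul_add_one, getElem?_mu_two_mul_add_one, ih, Option.map_map]
      simp only [Function.comp_def, add_assoc]

/-- Letter `x` of `μ^k(010)`. -/
def mu010 (k x : ℕ) : Fin 2 := ((x / 2 ^ k : ℕ) : Fin 2) + thueMorse (x % 2 ^ k)

theorem getElem?_mu_iterate_010 (k x : ℕ) :
    ((mu^[k]) [0, 1, 0])[x]? = if x < 3 * 2 ^ k then some (mu010 k x) else none := by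
  simp only [getElem?_mu_iterate, mu010, ← Nat.div_lt_iff_lt_mul (Nat.two_pow_pos k)]
  generalize x / 2 ^ k = q
  rcases lt_or_ge q 3 with hq | hq
  · interval_cases q <;> rfl
  · simp [Nat.not_lt.2 hq]

theorem mu010_zero (x : ℕ) : mu010 0 x = x := by simp [mu010, Nat.mod_one, thueMorse_zero]

theorem mu010_succ_two_mul (k x : ℕ) : mu010 (k + 1) (2 * x) = mu010 k x := by
  rw [mu010, mu010, pow_succ', ← Nat.div_div_eq_div_mul, Nat.mul_div_cancel_left _ two_pos,
    Nat.mul_mod_mul_left, thueMorse_two_mul]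

theorem mu010_one (k : ℕ) : mu010 k 1 = 1 := by
  rcases k with _ | k
  · simp [mu010, thueMorse_zero]
  · have : 1 < 2 ^ (k + 1) := Nat.one_lt_two_pow (by omega)
    simp [mu010, Nat.div_eq_of_lt this, Nat.mod_eq_of_lt this, thueMorse_one]

theorem mu010_of_lt {k t : ℕ} (ht : t < 2 ^ k) : mu010 k t = thueMorse t := by
  simp [mu010, Nat.div_eq_of_lt ht, Nat.mod_eq_of_lt ht]

theorem mu010_two_pow_add {k t : ℕ} (ht : t < 2 ^ k) :
    mu010 k (2 ^ k + t) = thueMorse t + 1 := by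
  rw [mu010, Nat.add_comm, Nat.add_div_right _ (Nat.two_pow_pos k), Nat.div_eq_of_lt ht,
    Nat.add_mod_right, Nat.mod_eq_of_lt ht]
  simp [add_comm]

theorem aK_eq (k : ℕ) : aK k = k := by
  have hlen : ((mu^[k]) [0]).length = 2 ^ k := by simp [length_mu_iterate]
  rw [aK, List.getLastD_eq_getLast?, List.getLast?_eq_getElem?, hlen, getElem?_mu_iterate,
    Nat.div_eq_of_lt (by simp), Nat.mod_eq_of_lt (by simp), thueMorse_two_pow_sub_one]
  simp

/-- `u` has an occurrence of `r_k` (for `g = 0`) or of its complement (for `g = 1`) at `i`. -/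
structure OccursAt (u : ℕ → Fin 2) (i k : ℕ) (g : Fin 2) : Prop where
  head : u i = k + g
  mid : ∀ x < 3 * 2 ^ k, u (i + 1 + x) = mu010 k x + g
  last : u (i + 1 + 3 * 2 ^ k) = g

theorem getElem?_factorAt {κ : ℕ} (u : ℕ → Fin κ) (i m x : ℕ) :
    (factorAt u i m)[x]? = if x < m then some (u (i + x)) else none := by
  unfold factorAt
  split_ifs with h <;> simp [h]

theorem factorAt_succ_eq_cons {κ : ℕ} (u : ℕ → Fin κ) (i m : ℕ) :
    factorAt u i (m + 1) = u i :: factorAt u (i + 1) m := by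
  simp [factorAt, List.range_succ_eq_map, Nat.add_assoc, Nat.add_comm 1]

theorem factorAt_succ_eq_append {κ : ℕ} (u : ℕ → Fin κ) (i m : ℕ) :
    factorAt u i (m + 1) = factorAt u i m ++ [u (i + m)] := by
  simp [factorAt, List.range_succ]

theorem factorAt_eq_map_mu_iterate_010_iff (u : ℕ → Fin 2) (j k : ℕ) (g : Fin 2) :
    factorAt u j (3 * 2 ^ k) = ((mu^[k]) [0, 1, 0]).map (· + g) ↔
      ∀ x < 3 * 2 ^ k, u (j + x) = mu010 k x + g := by
  refine ⟨fun h x hx => ?_, fun h => List.ext_getElem? fun x => ?_⟩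
  · simpa [getElem?_factorAt, getElem?_mu_iterate_010, hx] using congrArg (·[x]?) h
  · by_cases hx : x < 3 * 2 ^ k <;> simp [getElem?_factorAt, getElem?_mu_iterate_010, hx, h]

theorem factorAt_eq_map_rK_iff (u : ℕ → Fin 2) (i k : ℕ) (g : Fin 2) :
    factorAt u i (rK k).length = (rK k).map (· + g) ↔ OccursAt u i k g := by
  have hlen : (rK k).length = 3 * 2 ^ k + 1 + 1 := by simp [rK, length_mu_iterate]
  rw [hlen, factorAt_succ_eq_cons, factorAt_succ_eq_append, rK, List.map_cons, List.map_append,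
    List.cons_eq_cons, List.map_singleton, List.append_singleton_inj,
    factorAt_eq_map_mu_iterate_010_iff, aK_eq, zero_add]
  exact ⟨fun ⟨h, hm, hl⟩ => ⟨h, hm, hl⟩, fun ⟨h, hm, hl⟩ => ⟨h, hm, hl⟩⟩

theorem exists_occursAt_of_factorAt {u : ℕ → Fin 2} {i k : ℕ}
    (h : factorAt u i (rK k).length = rK k ∨ factorAt u i (rK k).length = compl (rK k)) :
    ∃ g, OccursAt u i k g := by
  rcases h with h | h
  · exact ⟨0, (factorAt_eq_map_rK_iff u i k 0).1 (by simpa using h)⟩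
  · refine ⟨1, (factorAt_eq_map_rK_iff u i k 1).1 (h.trans ?_)⟩
    exact List.map_congr_left fun a _ => by omega

def HasPeriodAt {α : Type*} (u : ℕ → α) (b q m : ℕ) : Prop :=
  ∀ t, t + q < m → u (b + t) = u (b + t + q)

def NoOverlap {α : Type*} (u : ℕ → α) : Prop :=
  ∀ b q m, 0 < q → HasPeriodAt u b q m → m ≤ 2 * q

theorem OverlapFree.noOverlap {κ : ℕ} {u : ℕ → Fin κ} (hu : OverlapFree u) :
    NoOverlap u := by
  intro b q m hq hper
  by_contra! hm
  set v := factorAt u b m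
  have hvlen : v.length = m := by simp [v, factorAt]
  have hvper : HasPer v q := by
    refine ⟨hq, by omega, fun t ht => ?_⟩
    rw [hvlen] at ht
    simp only [v, getElem?_factorAt, if_pos (by omega : t < m), if_pos ht, ← add_assoc, hper t ht]
  have hmin : HasPer v (minPer v) := Nat.sInf_mem (s := {q | HasPer v q}) ⟨q, hvper⟩
  have hexp : exponent v ≤ 2 :=
    hu v (List.ne_nil_of_length_pos (by omega)) ⟨b, by rw [hvlen]⟩
  have hpos : (0 : ℝ) < minPer v := by exact_mod_cast hmin.1
  rw [exponent, hvlen, div_le_iff₀ hpos] at hexp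
  have : minPer v ≤ q := Nat.sInf_le hvper
  have : (m : ℝ) ≤ 2 * q := hexp.trans (by gcongr)
  exact absurd (by exact_mod_cast this : m ≤ 2 * q) (by omega)

/-! A *pair* of `u` is a position `n` with `u (n + 1) = u n`. -/

section Binary

variable {u : ℕ → Fin 2}

theorem NoOverlap.not_cube (hu : NoOverlap u) (a : ℕ) :
    ¬ (u (a + 1) = u a ∧ u (a + 2) = u (a + 1)) := by
  rintro ⟨h1, h2⟩
  have := hu a 1 3 one_pos fun t ht => by
    obtain rfl | rfl : t = 0 ∨ t = 1 := by omega
    all_goals simp [h1, h2]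
  omega

theorem NoOverlap.eq_zero_of_pairs_three (hu : NoOverlap u) {m : ℕ} (h0 : u (m + 1) = u m)
    (h3 : u (m + 4) = u (m + 3)) : m = 0 := by
  obtain _ | n := m
  · rfl
  have c0 := hu.not_cube n
  have c1 := hu.not_cube (n + 1)
  have c3 := hu.not_cube (n + 3)
  have c4 := hu.not_cube (n + 4)
  simp only [Nat.add_assoc, Nat.reduceAdd] at *
  have := hu n 3 7 (by norm_num) fun t ht => by
    replace ht : t < 4 := by omega
    interval_cases t <;> simp only [Nat.add_assoc, Nat.reduceAdd, Nat.add_zero] <;> omega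
  omega

theorem NoOverlap.eq_zero_and_pair_three_of_pairs_odd_dist (hu : NoOverlap u) {m n : ℕ}
    (hmn : m < n) (hodd : (n - m) % 2 = 1) (hm : u (m + 1) = u m) (hn : u (n + 1) = u n) :
    m = 0 ∧ u 4 = u 3 := by
  induction hd : n - m using Nat.strong_induction_on generalizing m n with
  | _ d ih =>
  by_cases hbetween : ∃ p, m < p ∧ p < n ∧ u (p + 1) = u p
  · obtain ⟨p, hmp, hpn, hp⟩ := hbetween
    rcases Nat.mod_two_eq_zero_or_one (p - m) with heven | hodd'
    · have := ih (n - p) (by omega) hpn (by omega) hp hn rfl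
      omega
    · exact ih (p - m) (by omega) hmp hodd' hm hp rfl
  push Not at hbetween
  rcases (by omega : n = m + 1 ∨ n = m + 3 ∨ m + 5 ≤ n) with rfl | rfl | h5
  · exact (hu.not_cube m ⟨hm, hn⟩).elim
  · obtain rfl := hu.eq_zero_of_pairs_three hm hn
    exact ⟨rfl, hn⟩
  · have a1 := hbetween (m + 1) (by omega) (by omega)
    have a2 := hbetween (m + 2) (by omega) (by omega)
    have a3 := hbetween (m + 3) (by omega) (by omega)
    have a4 := hbetween (m + 4) (by omega) (by omega)
    simp only [Nat.add_assoc, Nat.reduceAdd] at a1 a2 a3 a4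
    have := hu (m + 1) 2 5 two_pos fun t ht => by
      replace ht : t < 3 := by omega
      interval_cases t <;> simp only [Nat.add_assoc, Nat.reduceAdd, Nat.add_zero] <;> omega
    omega

/-- From position `c` on, `u` is the `μ`-image of `fun t => u (c + 2 * t)`. -/
def MuBlocksFrom (u : ℕ → Fin 2) (c : ℕ) : Prop :=
  ∀ t, u (c + 2 * t + 1) = u (c + 2 * t) + 1

theorem MuBlocksFrom.mod_two_ne {c p : ℕ} (h : MuBlocksFrom u c) (hp : u (p + 1) = u p)
    (hcp : c ≤ p) : p % 2 ≠ c % 2 := by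
  intro hpc
  have := h ((p - c) / 2)
  rw [show c + 2 * ((p - c) / 2) = p by omega] at this
  omega

theorem NoOverlap.exists_muBlocksFrom (hu : NoOverlap u) {p : ℕ} (hp : u (p + 1) = u p) :
    ∃ c ≤ 2, MuBlocksFrom u c ∧ (c = 2 → u 1 = u 0 ∧ u 4 = u 3) := by
  by_cases hdefect : u 1 = u 0 ∧ u 4 = u 3
  · refine ⟨2, le_rfl, fun t => ?_, fun _ => hdefect⟩
    by_contra hne
    have hpair : u (2 + 2 * t + 1) = u (2 + 2 * t) := by omega
    rcases t with _ | t
    · exact hu.not_cube 2 ⟨hpair, hdefect.2⟩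
    · have := hu.eq_zero_and_pair_three_of_pairs_odd_dist (m := 3) (by omega) (by omega)
        hdefect.2 hpair
      omega
  · refine ⟨(p + 1) % 2, by omega, fun t => ?_, by omega⟩
    by_contra hne
    have hpair : u ((p + 1) % 2 + 2 * t + 1) = u ((p + 1) % 2 + 2 * t) := by omega
    have odd_pairs : ∀ m n, m < n → (n - m) % 2 = 1 → u (m + 1) = u m → u (n + 1) = u n →
        False := fun m n hmn hodd hm hn => by
      obtain ⟨rfl, h43⟩ := hu.eq_zero_and_pair_three_of_pairs_odd_dist hmn hodd hm hn
      exact hdefect ⟨hm, h43⟩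
    rcases lt_or_gt_of_ne (show (p + 1) % 2 + 2 * t ≠ p by omega) with h | h
    · exact odd_pairs _ _ h (by omega) hpair hp
    · exact odd_pairs _ _ h (by omega) hp hpair

/-- For each letter `a`, `u` begins with a square `xx` whose half `x` ends in `a`. -/
def StartsWithSquares (u : ℕ → Fin 2) : Prop :=
  ∀ a, ∃ L, 0 < L ∧ HasPeriodAt u 0 L (2 * L) ∧ u (L - 1) = a

theorem NoOverlap.startsWithSquares_of_pairs (hu : NoOverlap u) (h01 : u 1 = u 0)
    (h43 : u 4 = u 3) : StartsWithSquares u := by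
  have c0 := hu.not_cube 0
  have c2 := hu.not_cube 2
  have c3 := hu.not_cube 3
  simp only [Nat.zero_add, Nat.reduceAdd] at c0 c2 c3
  intro a
  rcases (by omega : a = u 0 ∨ a = u 0 + 1) with rfl | rfl
  · refine ⟨1, one_pos, fun t ht => ?_, rfl⟩
    obtain rfl : t = 0 := by omega
    exact h01.symm
  · refine ⟨3, by norm_num, fun t ht => ?_, show u 2 = u 0 + 1 by omega⟩
    replace ht : t < 3 := by omega
    interval_cases t <;> simp only [Nat.zero_add, Nat.reduceAdd] <;> omega

theorem MuBlocksFrom.hasPeriodAt {c b q m : ℕ} (h : MuBlocksFrom u c)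
    (hv : HasPeriodAt (fun t => u (c + 2 * t)) b q m) :
    HasPeriodAt u (c + 2 * b) (2 * q) (2 * m) := by
  intro s hs
  obtain ⟨t, rfl | rfl⟩ := Nat.even_or_odd' s
  · have := hv t (by omega)
    convert this using 2 <;> ring
  · have := hv t (by omega)
    beta_reduce at this
    rw [show c + 2 * b + (2 * t + 1) = c + 2 * (b + t) + 1 by ring,
      show c + 2 * (b + t) + 1 + 2 * q = c + 2 * (b + t + q) + 1 by ring, h, h, this]

theorem MuBlocksFrom.noOverlap {c : ℕ} (h : MuBlocksFrom u c) (hu : NoOverlap u) :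
    NoOverlap fun t => u (c + 2 * t) := fun _ _ _ hq hv => by
  have := hu _ _ _ (by omega) (h.hasPeriodAt hv)
  omega

theorem MuBlocksFrom.startsWithSquares (h : MuBlocksFrom u 0)
    (hv : StartsWithSquares fun t => u (0 + 2 * t)) : StartsWithSquares u := by
  intro a
  obtain ⟨L, hL, hper, hlast⟩ := hv (a + 1)
  beta_reduce at hlast
  refine ⟨2 * L, by omega, h.hasPeriodAt hper, ?_⟩
  have := h (L - 1)
  rw [show 2 * L - 1 = 0 + 2 * (L - 1) + 1 by omega, this, hlast]
  omega

/-- If `μ(x)` ends in the letter `a` preceding it, `a μ(x) μ(x)` is an overlap. -/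
theorem MuBlocksFrom.not_startsWithSquares {c : ℕ} (h : MuBlocksFrom u c) (hc : 0 < c)
    (hu : NoOverlap u) : ¬ StartsWithSquares fun t => u (c + 2 * t) := by
  intro hv
  obtain ⟨L, hL, hper, hlast⟩ := hv (u (c - 1) + 1)
  beta_reduce at hlast
  have hper' := h.hasPeriodAt hper
  have := hu (c - 1) (2 * L) (2 * (2 * L) + 1) (by omega) fun t ht => ?_
  · omega
  rcases t with _ | t
  · have := h (L - 1)
    rw [show c - 1 + 0 + 2 * L = c + 2 * (L - 1) + 1 by omega, this, hlast, Nat.add_zero]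
    omega
  · have := hper' t (by omega)
    rwa [show c - 1 + (t + 1) = c + 2 * 0 + t by omega]

theorem MuBlocksFrom.occursAt {c j k : ℕ} {g : Fin 2} (h : MuBlocksFrom u c)
    (hocc : OccursAt u (c + 2 * j + 1) (k + 1) g) : OccursAt (fun t => u (c + 2 * t)) j k g where
  head := by
    have := hocc.head
    have := h j
    push_cast at *
    omega
  mid x hx := by
    have := hocc.mid (2 * x) (by rw [pow_succ]; omega)
    rwa [mu010_succ_two_mul, show c + 2 * j + 1 + 1 + 2 * x = c + 2 * (j + 1 + x) by ring] at this
  last := by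
    have := hocc.last
    rwa [pow_succ, show c + 2 * j + 1 + 1 + 3 * (2 ^ k * 2) = c + 2 * (j + 1 + 3 * 2 ^ k) by ring]
      at this

theorem NoOverlap.occursAt_zero (hu : NoOverlap u) {i : ℕ} {g : Fin 2}
    (hocc : OccursAt u i 0 g) : i = 0 ∧ StartsWithSquares u := by
  have h0 := hocc.head
  have h1 := hocc.mid 0 (by simp)
  have h3 := hocc.mid 2 (by simp)
  have h4 := hocc.last
  simp only [mu010_zero, pow_zero, mul_one, Nat.add_zero, Nat.add_assoc, Nat.reduceAdd,
    Nat.cast_zero, Nat.cast_ofNat, Fin.isValue, zero_add] at h0 h1 h3 h4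
  obtain rfl := hu.eq_zero_of_pairs_three (m := i) (by omega) (by omega)
  simp only [Nat.zero_add] at h0 h1 h3 h4
  exact ⟨rfl, hu.startsWithSquares_of_pairs (by omega) (by omega)⟩

theorem OccursAt.pair_two {i k : ℕ} {g : Fin 2} (hocc : OccursAt u i (k + 1) g) :
    u (i + 2 + 1) = u (i + 2) := by
  have := Nat.one_le_two_pow (n := k + 1)
  have h1 := hocc.mid 1 (by omega)
  have h2 := hocc.mid (2 * 1) (by omega)
  rw [mu010_one] at h1
  rw [mu010_succ_two_mul, mu010_one] at h2
  simp only [Nat.add_assoc, Nat.reduceAdd, Nat.reduceMul] at h1 h2 ⊢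
  rw [h1, h2]

theorem NoOverlap.occursAt_le_and_startsWithSquares (hu : NoOverlap u) {i k : ℕ} {g : Fin 2}
    (hocc : OccursAt u i k g) : i ≤ 2 ^ k - 1 ∧ (i = 2 ^ k - 1 → StartsWithSquares u) := by
  induction k generalizing u i with
  | zero =>
    obtain ⟨rfl, hsq⟩ := hu.occursAt_zero hocc
    exact ⟨le_rfl, fun _ => hsq⟩
  | succ k ih =>
    have h2k : 2 ^ (k + 1) = 2 * 2 ^ k := pow_succ' 2 k
    have := Nat.one_le_two_pow (n := k)
    have hpair := hocc.pair_two
    obtain ⟨c, hc, hblocks, hdefect⟩ := hu.exists_muBlocksFrom hpair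
    -- the square `u (i + 2) u (i + 3)` is not a `μ`-block, so `i + 1 ≡ c [MOD 2]`
    have hpar := hblocks.mod_two_ne hpair (by omega)
    have hsq : c = 2 → StartsWithSquares u := fun h =>
      hu.startsWithSquares_of_pairs (hdefect h).1 (hdefect h).2
    obtain ⟨j, rfl⟩ | hic : (∃ j, i = c + 2 * j + 1) ∨ i + 1 = c := by
      rcases Nat.lt_or_ge i c with h | h
      · right; omega
      · left; exact ⟨(i - c) / 2, by omega⟩
    · obtain ⟨hj, hjmax⟩ := ih (hblocks.noOverlap hu) (hblocks.occursAt hocc)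
      have hjlt : 0 < c → j < 2 ^ k - 1 := fun hc0 =>
        lt_of_le_of_ne hj fun h => hblocks.not_startsWithSquares hc0 hu (hjmax h)
      refine ⟨?_, fun hi => ?_⟩
      · rcases Nat.eq_zero_or_pos c with rfl | hc0
        · omega
        · have := hjlt hc0
          omega
      · rcases (by omega : c = 0 ∨ c = 2) with rfl | rfl
        · exact hblocks.startsWithSquares (hjmax (by omega))
        · exact hsq rfl
    · exact ⟨by omega, fun hi => hsq (by omega)⟩

theorem NoOverlap.occursAt_unique (hu : NoOverlap u) {i j k : ℕ} {g g' : Fin 2}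
    (hi : OccursAt u i k g) (hj : OccursAt u j k g') : i = j := by
  wlog hij : i < j generalizing i j g g'
  · rcases (not_lt.1 hij).lt_or_eq with h | h
    · exact (this hj hi h).symm
    · exact h.symm
  exfalso
  have hjle := (hu.occursAt_le_and_startsWithSquares hj).1
  have := Nat.one_le_two_pow (n := k)
  rcases (by omega : g' = g ∨ g' = g + 1) with rfl | hg
  · have := hu (i + 1) (j - i) (3 * 2 ^ k) (by omega) fun t ht => by
      rw [hi.mid t (by omega), show i + 1 + t + (j - i) = j + 1 + t by omega, hj.mid t (by omega)]
    omega
  · -- `μ^k(010) = X X̄ X`: the `X` of the copy at `j` continues the `X̄` of the copy at `i`.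
    have := hu (j + 1) (2 ^ k - (j - i)) (2 ^ k + (2 ^ k - (j - i))) (by omega) fun t ht => by
      have htk : t < 2 ^ k := by omega
      have h1 := hj.mid t (by omega)
      have h2 := hi.mid (2 ^ k + t) (by omega)
      rw [mu010_of_lt htk] at h1
      rw [mu010_two_pow_add htk] at h2
      rw [show j + 1 + t + (2 ^ k - (j - i)) = i + 1 + (2 ^ k + t) by omega]
      omega
    omega

end Binary

/-- In an overlap-free infinite binary word, any occurrence of `r_k` or of its
complement is at a position `≤ 2^k - 1`; in total they occur at most once. -/
theorem rK_occurrence (u : ℕ → Fin 2) (hu : OverlapFree u) (k : ℕ) :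
    (∀ i, (factorAt u i (rK k).length = rK k ∨ factorAt u i (rK k).length = compl (rK k)) →
      i ≤ 2 ^ k - 1) ∧
    (∀ i j,
      (factorAt u i (rK k).length = rK k ∨ factorAt u i (rK k).length = compl (rK k)) →
      (factorAt u j (rK k).length = rK k ∨ factorAt u j (rK k).length = compl (rK k)) →
      i = j) := by
  have hu := hu.noOverlap
  refine ⟨fun i hi => ?_, fun i j hi hj => ?_⟩
  · obtain ⟨g, hg⟩ := exists_occursAt_of_factorAt hi
    exact (hu.occursAt_le_and_startsWithSquares hg).1
  · obtain ⟨g, hg⟩ := exists_occursAt_of_factorAt hi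
    obtain ⟨g', hg'⟩ := exists_occursAt_of_factorAt hj
    exact hu.occursAt_unique hg hg'
end

section
/- The subword complexity of the twisted Thue–Morse word t′ satisfies, for all n ≥ 4 and the integer i ≥ 2 with 2^i ≤ n ≤ 2^{i+1}: p_{t′}(n+1) = 4n − 3·2^{i−2} if 2^i ≤ n ≤ 3·2^{i−1}; p_{t′}(n+1) = 3n + 3·2^{i−2} if 3·2^{i−1} ≤ n ≤ 7·2^{i−2}; and p_{t′}(n+1) = 2n + 5·2^{i−1} if 7·2^{i−2} ≤ n ≤ 2^{i+1}. -/
/-- The twisted Thue–Morse word: `t' n` is the number of 0's, mod 2,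
in the binary expansion of `n` (the expansion of 0 being empty). -/
def twistedTM : ℕ → Fin 2 := fun n => Fin.ofNat 2 ((Nat.digits 2 n).count 0)

/-!
For `k ≥ 1`, `t'(2k) = t'(k) + 1` and `t'(2k+1) = t'(k)`: after its first letter, `t'` is a fixed
point of `μ : a ↦ (a+1) a`. Hence a factor of length `m` occurring at a position `p ≥ 1` is a window
of `μ(w)`, where `w` is the factor of length about `m/2` at `p/2`. The window determines `w` and, for
`m ≥ 5`, the parity of `p`, since `t'` contains no cube `aaa` and hence no `ababa`; the prefix of
length `m ≥ 5` occurs only at position 0. Counting gives `p(2m) = p(m) + p(m+1)` and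
`p(2m+1) = 2 p(m+1)`, and the formula follows by induction over the dyadic blocks, starting from the
factors of lengths 3 and 4.
-/

open Set

section Factors

variable {k : ℕ} (u : ℕ → Fin k)

def factorsFrom (p m : ℕ) : Set (List (Fin k)) := (factorAt u · m) '' Ici p

@[simp]
lemma length_factorAt (i m : ℕ) : (factorAt u i m).length = m := by
  simp [factorAt]

lemma factorAt_eq_factorAt_iff {i j m : ℕ} :
    factorAt u i m = factorAt u j m ↔ ∀ l < m, u (i + l) = u (j + l) := by
  simp [factorAt, List.map_inj_left]

lemma complexity_eq_ncard_factorsFrom_zero (m : ℕ) :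
    complexity u m = (factorsFrom u 0 m).ncard := by
  unfold complexity
  congr 1
  ext v
  simp only [IsFactor, factorsFrom, mem_ofPred_eq, mem_image, mem_Ici, zero_le, true_and]
  constructor
  · rintro ⟨rfl, i, hi⟩
    exact ⟨i, hi.symm⟩
  · rintro ⟨i, rfl⟩
    exact ⟨length_factorAt u i m, i, by rw [length_factorAt]⟩

lemma factorsFrom_subset_setOf_length (p m : ℕ) : factorsFrom u p m ⊆ {v | v.length = m} := by
  rintro _ ⟨i, -, rfl⟩
  exact length_factorAt u i m

lemma factorsFrom_finite (p m : ℕ) : (factorsFrom u p m).Finite :=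
  (List.finite_length_eq (Fin k) m).subset (factorsFrom_subset_setOf_length u p m)

lemma factorsFrom_zero_eq_insert (m : ℕ) :
    factorsFrom u 0 m = insert (factorAt u 0 m) (factorsFrom u 1 m) := by
  ext v
  simp only [factorsFrom, mem_insert_iff, mem_image, mem_Ici, zero_le, true_and]
  constructor
  · rintro ⟨i, rfl⟩
    rcases Nat.eq_zero_or_pos i with rfl | hi
    exacts [Or.inl rfl, Or.inr ⟨i, hi, rfl⟩]
  · rintro (rfl | ⟨i, -, rfl⟩)
    exacts [⟨0, rfl⟩, ⟨i, rfl⟩]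

lemma complexity_eq_ncard_factorsFrom_one_add_one {m : ℕ}
    (h : ∀ i, 0 < i → factorAt u i m ≠ factorAt u 0 m) :
    complexity u m = (factorsFrom u 1 m).ncard + 1 := by
  rw [complexity_eq_ncard_factorsFrom_zero, factorsFrom_zero_eq_insert,
    ncard_insert_of_notMem _ (factorsFrom_finite u 1 m)]
  rintro ⟨i, hi, hv⟩
  exact h i hi hv

lemma factorsFrom_eq_of_subset {m : ℕ} {S : Set (List (Fin k))} (hS : S ⊆ factorsFrom u 1 m)
    (hu : ∀ i, factorAt u i m ∈ S) : factorsFrom u 1 m = S ∧ factorsFrom u 0 m = S := by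
  have h₀ : factorsFrom u 0 m ⊆ S := by
    rintro _ ⟨i, -, rfl⟩
    exact hu i
  have h₁ : factorsFrom u 1 m ⊆ factorsFrom u 0 m := image_mono (Ici_subset_Ici.mpr zero_le_one)
  exact ⟨(h₁.trans h₀).antisymm hS, h₀.antisymm (hS.trans h₁)⟩

end Factors

lemma twistedTM_of_pos {n : ℕ} (hn : 0 < n) :
    twistedTM n = twistedTM (n / 2) + if n % 2 = 0 then 1 else 0 := by
  simp only [twistedTM, Nat.digits_def' one_lt_two hn, List.count_cons, beq_iff_eq]
  split_ifs <;> ext <;> simp [Fin.val_add]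

lemma twistedTM_two_mul {k : ℕ} (hk : 0 < k) : twistedTM (2 * k) = twistedTM k + 1 := by
  simp [twistedTM_of_pos (by omega : 0 < 2 * k)]

lemma twistedTM_two_mul_add_one (k : ℕ) : twistedTM (2 * k + 1) = twistedTM k := by
  rw [twistedTM_of_pos (by omega), if_neg (by omega), show (2 * k + 1) / 2 = k by omega, add_zero]

lemma twistedTM_two_mul_ne {k : ℕ} (hk : 0 < k) : twistedTM (2 * k) ≠ twistedTM (2 * k + 1) := by
  rw [twistedTM_two_mul hk, twistedTM_two_mul_add_one]
  generalize twistedTM k = a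
  revert a
  decide

lemma twistedTM_two_mul_add_one_ne_iff (j : ℕ) :
    twistedTM (2 * j + 1) ≠ twistedTM (2 * j + 2) ↔ twistedTM j = twistedTM (j + 1) := by
  rw [twistedTM_two_mul_add_one, show 2 * j + 2 = 2 * (j + 1) by ring, twistedTM_two_mul (by omega)]
  generalize twistedTM j = a, twistedTM (j + 1) = b
  revert a b
  decide

lemma twistedTM_not_cube (k : ℕ) :
    ¬(twistedTM k = twistedTM (k + 1) ∧ twistedTM (k + 1) = twistedTM (k + 2)) := by
  rintro ⟨h₁, h₂⟩
  obtain ⟨j, rfl | rfl⟩ := Nat.even_or_odd' k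
  · rcases Nat.eq_zero_or_pos j with rfl | hj
    · revert h₂
      decide
    · exact twistedTM_two_mul_ne hj h₁
  · exact twistedTM_two_mul_ne (k := j + 1) (by omega) h₂

/-- `t'(2j+1) ≠ t'(2j+2)` exactly when `t'(j) = t'(j+1)`, so `ababa` would force a cube `aaa`. -/
lemma twistedTM_not_alternating (i : ℕ) :
    ¬∀ l < 4, twistedTM (i + l) ≠ twistedTM (i + l + 1) := by
  intro h
  set j := i / 2
  have h₁ := h (2 * j + 1 - i) (by omega)
  have h₂ := h (2 * j + 3 - i) (by omega)
  rw [show i + (2 * j + 1 - i) = 2 * j + 1 by omega, twistedTM_two_mul_add_one_ne_iff] at h₁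
  rw [show i + (2 * j + 3 - i) = 2 * (j + 1) + 1 by omega, twistedTM_two_mul_add_one_ne_iff,
    show j + 1 + 1 = j + 2 by ring] at h₂
  exact twistedTM_not_cube j ⟨h₁, h₂⟩

lemma factorAt_twistedTM_two_mul_ne {m k k' : ℕ} (hm : 5 ≤ m) (hk : 0 < k) :
    factorAt twistedTM (2 * k) m ≠ factorAt twistedTM (2 * k' + 1) m := by
  rw [Ne, factorAt_eq_factorAt_iff]
  intro h
  apply twistedTM_not_alternating (2 * k)
  intro l hl
  obtain ⟨j, rfl | rfl⟩ := Nat.even_or_odd' l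
  · rw [← mul_add]
    exact twistedTM_two_mul_ne (by omega)
  · rw [h _ (by omega), show 2 * k + (2 * j + 1) + 1 = 2 * k + (2 * j + 2) by ring, h _ (by omega),
      show 2 * k' + 1 + (2 * j + 1) = 2 * (k' + j + 1) by ring,
      show 2 * k' + 1 + (2 * j + 2) = 2 * (k' + j + 1) + 1 by ring]
    exact twistedTM_two_mul_ne (by omega)

lemma factorAt_twistedTM_ne_factorAt_zero {m i : ℕ} (hm : 5 ≤ m) (hi : 0 < i) :
    factorAt twistedTM i m ≠ factorAt twistedTM 0 m := by
  -- `t'(0) ⋯ t'(4) = 00100`, and a square `00` can never sit on a pair `t'(2j) t'(2j+1)`, `j ≥ 1`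
  have hprefix : twistedTM 0 = 0 ∧ twistedTM 1 = 0 ∧ twistedTM 3 = 0 ∧ twistedTM 4 = 0 := by decide
  rw [Ne, factorAt_eq_factorAt_iff]
  intro h
  obtain ⟨k, rfl | rfl⟩ := Nat.even_or_odd' i
  · apply twistedTM_two_mul_ne (k := k) (by omega)
    have h₀ := h 0 (by omega)
    have h₁ := h 1 (by omega)
    simp_all
  · apply twistedTM_two_mul_ne (k := k + 2) (by omega)
    have h₃ := h 3 (by omega)
    have h₄ := h 4 (by omega)
    rw [show 2 * k + 1 + 3 = 2 * (k + 2) by ring] at h₃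
    rw [show 2 * k + 1 + 4 = 2 * (k + 2) + 1 by ring] at h₄
    simp_all

lemma complexity_twistedTM_eq_ncard_add_one {m : ℕ} (hm : 5 ≤ m) :
    complexity twistedTM m = (factorsFrom twistedTM 1 m).ncard + 1 :=
  complexity_eq_ncard_factorsFrom_one_add_one twistedTM
    fun _ ↦ factorAt_twistedTM_ne_factorAt_zero hm

/-- The window of length `m` at offset `r` in `μ(w)`, where `μ : a ↦ (a+1) a`. -/
def muWindow (r m : ℕ) (w : List (Fin 2)) : List (Fin 2) :=
  List.ofFn fun l : Fin m => w.getD ((l + r) / 2) 0 + if (l + r) % 2 = 0 then 1 else 0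

lemma muWindow_getD {r m l : ℕ} (w : List (Fin 2)) (hl : l < m) :
    (muWindow r m w).getD l 0 = w.getD ((l + r) / 2) 0 + if (l + r) % 2 = 0 then 1 else 0 := by
  rw [List.getD_eq_getElem _ _ (by simpa [muWindow] using hl)]
  simp [muWindow]

lemma muWindow_injOn {r m n : ℕ} (hr : r ≤ 1) (hm : 0 < m) (hn : 2 * n ≤ m + r + 1) :
    InjOn (muWindow r m) {w | w.length = n} := by
  intro w hw w' hw' h
  apply List.ext_getElem (hw.trans hw'.symm)
  intro j hj hj'
  -- the `j`-th letter of `w` is read off at position `2j - r` of the window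
  have hpos := congrArg (·.getD (2 * j - r) 0) h
  simp only [muWindow_getD _ (show 2 * j - r < m by simp_all; omega),
    show (2 * j - r + r) / 2 = j by omega, add_left_inj] at hpos
  rwa [List.getD_eq_getElem _ _ hj, List.getD_eq_getElem _ _ hj'] at hpos

lemma factorAt_twistedTM_eq_muWindow {k r : ℕ} (m : ℕ) (hkr : 0 < 2 * k + r) :
    factorAt twistedTM (2 * k + r) m = muWindow r m (factorAt twistedTM k ((m + r + 1) / 2)) := by
  apply List.ext_getElem (by simp [muWindow])
  intro l hl _
  simp only [length_factorAt] at hl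
  simp only [factorAt, muWindow, List.getElem_map, List.getElem_range, List.getElem_ofFn]
  rw [List.getD_eq_getElem _ _ (by simp; omega)]
  simp only [List.getElem_map, List.getElem_range]
  rw [twistedTM_of_pos (by omega), show (2 * k + r + l) / 2 = k + (l + r) / 2 by omega,
    show (2 * k + r + l) % 2 = (l + r) % 2 by omega]

lemma factorAt_twistedTM_two_mul {k : ℕ} (m : ℕ) (hk : 0 < k) :
    factorAt twistedTM (2 * k) m = muWindow 0 m (factorAt twistedTM k ((m + 1) / 2)) :=
  factorAt_twistedTM_eq_muWindow (r := 0) m (by omega)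

lemma factorAt_twistedTM_two_mul_add_one (k m : ℕ) :
    factorAt twistedTM (2 * k + 1) m = muWindow 1 m (factorAt twistedTM k (m / 2 + 1)) := by
  rw [factorAt_twistedTM_eq_muWindow m (by omega), show (m + 1 + 1) / 2 = m / 2 + 1 by omega]

lemma factorsFrom_one_twistedTM_eq_union (m : ℕ) :
    factorsFrom twistedTM 1 m =
      muWindow 0 m '' factorsFrom twistedTM 1 ((m + 1) / 2) ∪
        muWindow 1 m '' factorsFrom twistedTM 0 (m / 2 + 1) := by
  ext v
  constructor
  · rintro ⟨p, hp, rfl⟩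
    obtain ⟨k, rfl | rfl⟩ := Nat.even_or_odd' p
    · exact Or.inl ⟨_, ⟨k, by simp_all; omega, rfl⟩,
        (factorAt_twistedTM_two_mul m (by simp_all; omega)).symm⟩
    · exact Or.inr ⟨_, ⟨k, Nat.zero_le k, rfl⟩, (factorAt_twistedTM_two_mul_add_one k m).symm⟩
  · rintro (⟨_, ⟨k, hk, rfl⟩, rfl⟩ | ⟨_, ⟨k, -, rfl⟩, rfl⟩)
    · exact ⟨2 * k, by simp_all; omega, factorAt_twistedTM_two_mul m hk⟩
    · exact ⟨2 * k + 1, by simp, factorAt_twistedTM_two_mul_add_one k m⟩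

lemma ncard_factorsFrom_one_twistedTM {m : ℕ} (hm : 5 ≤ m) :
    (factorsFrom twistedTM 1 m).ncard =
      (factorsFrom twistedTM 1 ((m + 1) / 2)).ncard + complexity twistedTM (m / 2 + 1) := by
  have hdisj : Disjoint (muWindow 0 m '' factorsFrom twistedTM 1 ((m + 1) / 2))
      (muWindow 1 m '' factorsFrom twistedTM 0 (m / 2 + 1)) := by
    rw [disjoint_left]
    rintro _ ⟨_, ⟨k, hk, rfl⟩, rfl⟩ ⟨_, ⟨k', -, rfl⟩, h⟩
    rw [← factorAt_twistedTM_two_mul m hk, ← factorAt_twistedTM_two_mul_add_one] at h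
    exact factorAt_twistedTM_two_mul_ne hm hk h.symm
  rw [factorsFrom_one_twistedTM_eq_union, ncard_union_eq hdisj ((factorsFrom_finite _ _ _).image _)
      ((factorsFrom_finite _ _ _).image _),
    ((muWindow_injOn (by omega) (by omega) (by omega)).mono
      (factorsFrom_subset_setOf_length _ _ _)).ncard_image,
    ((muWindow_injOn le_rfl (by omega) (by omega)).mono
      (factorsFrom_subset_setOf_length _ _ _)).ncard_image,
    complexity_eq_ncard_factorsFrom_zero]

lemma complexity_twistedTM_two_mul {m : ℕ} (hm : 5 ≤ m) :
    complexity twistedTM (2 * m) = complexity twistedTM m + complexity twistedTM (m + 1) := by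
  have h := ncard_factorsFrom_one_twistedTM (m := 2 * m) (by omega)
  rw [show (2 * m + 1) / 2 = m by omega, show 2 * m / 2 = m by omega] at h
  have h₁ := complexity_twistedTM_eq_ncard_add_one (m := 2 * m) (by omega)
  have h₂ := complexity_twistedTM_eq_ncard_add_one hm
  omega

lemma complexity_twistedTM_two_mul_add_one {m : ℕ} (hm : 4 ≤ m) :
    complexity twistedTM (2 * m + 1) = 2 * complexity twistedTM (m + 1) := by
  have h := ncard_factorsFrom_one_twistedTM (m := 2 * m + 1) (by omega)
  rw [show (2 * m + 1 + 1) / 2 = m + 1 by omega, show (2 * m + 1) / 2 = m by omega] at h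
  have h₁ := complexity_twistedTM_eq_ncard_add_one (m := 2 * m + 1) (by omega)
  have h₂ := complexity_twistedTM_eq_ncard_add_one (m := m + 1) (by omega)
  omega

lemma factorAt_three {k : ℕ} (u : ℕ → Fin k) (i : ℕ) :
    factorAt u i 3 = [u i, u (i + 1), u (i + 2)] := by
  simp [factorAt, List.range_succ]

lemma factorAt_four {k : ℕ} (u : ℕ → Fin k) (i : ℕ) :
    factorAt u i 4 = [u i, u (i + 1), u (i + 2), u (i + 3)] := by
  simp [factorAt, List.range_succ]

/-- Every word of length 3 or 4 without a cube `aaa` already occurs in `t'(1) ⋯ t'(16)`. -/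
lemma ncard_factorsFrom_twistedTM_three_four :
    (factorsFrom twistedTM 1 3).ncard = 6 ∧ complexity twistedTM 3 = 6 ∧
      (factorsFrom twistedTM 1 4).ncard = 10 ∧ complexity twistedTM 4 = 10 := by
  have hsub (m : ℕ) : (((Finset.Icc 1 13).image (factorAt twistedTM · m) : Finset _) : Set _) ⊆
      factorsFrom twistedTM 1 m := by
    rw [Finset.coe_image, Finset.coe_Icc]
    exact image_mono Icc_subset_Ici_self
  have h₃ : ∀ a b c : Fin 2, ¬(a = b ∧ b = c) →
      [a, b, c] ∈ (Finset.Icc 1 13).image (factorAt twistedTM · 3) := by decide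
  have h₄ : ∀ a b c d : Fin 2, ¬(a = b ∧ b = c) → ¬(b = c ∧ c = d) →
      [a, b, c, d] ∈ (Finset.Icc 1 13).image (factorAt twistedTM · 4) := by decide
  obtain ⟨e₃, e₃'⟩ := factorsFrom_eq_of_subset twistedTM (hsub 3) fun i ↦ by
    rw [factorAt_three]
    exact h₃ _ _ _ (twistedTM_not_cube i)
  obtain ⟨e₄, e₄'⟩ := factorsFrom_eq_of_subset twistedTM (hsub 4) fun i ↦ by
    rw [factorAt_four]
    exact h₄ _ _ _ _ (twistedTM_not_cube i) (twistedTM_not_cube (i + 1))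
  simp only [complexity_eq_ncard_factorsFrom_zero, e₃, e₃', e₄, e₄', ncard_coe_finset]
  decide

lemma complexity_twistedTM_five_to_nine :
    complexity twistedTM 5 = 13 ∧ complexity twistedTM 6 = 17 ∧ complexity twistedTM 7 = 21 ∧
      complexity twistedTM 8 = 24 ∧ complexity twistedTM 9 = 26 := by
  obtain ⟨a₃, p₃, a₄, p₄⟩ := ncard_factorsFrom_twistedTM_three_four
  have h (m : ℕ) (hm : 5 ≤ m) :=
    And.intro (ncard_factorsFrom_one_twistedTM hm) (complexity_twistedTM_eq_ncard_add_one hm)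
  obtain ⟨r₅, e₅⟩ := h 5 (by norm_num)
  obtain ⟨r₆, e₆⟩ := h 6 (by norm_num)
  obtain ⟨r₇, e₇⟩ := h 7 (by norm_num)
  obtain ⟨r₈, e₈⟩ := h 8 (by norm_num)
  obtain ⟨r₉, e₉⟩ := h 9 (by norm_num)
  simp only [Nat.reduceAdd, Nat.reduceDiv] at r₅ r₆ r₇ r₈ r₉
  omega

/-- The piecewise formula is concave, hence a minimum of three affine functions. This form
survives the recurrences because the breakpoints `6 * 2^j` and `7 * 2^j` are integers, so `m` and
`m + 1` always lie on a common affine piece. -/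
lemma complexity_twistedTM_succ_eq_min (j : ℕ) {n : ℕ} (h₁ : 4 * 2 ^ j ≤ n) (h₂ : n ≤ 8 * 2 ^ j) :
    complexity twistedTM (n + 1) =
      min (4 * n - 3 * 2 ^ j) (min (3 * n + 3 * 2 ^ j) (2 * n + 10 * 2 ^ j)) := by
  induction j generalizing n with
  | zero =>
    obtain ⟨p₅, p₆, p₇, p₈, p₉⟩ := complexity_twistedTM_five_to_nine
    simp only [pow_zero, mul_one] at h₁ h₂ ⊢
    interval_cases n <;> simp [*]
  | succ j ih =>
    have ha : 0 < 2 ^ j := by positivity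
    rw [pow_succ] at h₁ h₂ ⊢
    obtain ⟨m, rfl | rfl⟩ := Nat.even_or_odd' n
    · rw [complexity_twistedTM_two_mul_add_one (by omega), ih (by omega) (by omega)]
      omega
    · rw [show 2 * m + 1 + 1 = 2 * (m + 1) by ring, complexity_twistedTM_two_mul (by omega),
        ih (by omega) (by omega), ih (by omega) (by omega)]
      omega

theorem twistedTM_complexity_general (n i : ℕ) (hi : 2 ≤ i)
    (h1 : 2 ^ i ≤ n) (h2 : n ≤ 2 ^ (i + 1)) :
    (n ≤ 3 * 2 ^ (i - 1) →
      complexity twistedTM (n + 1) = 4 * n - 3 * 2 ^ (i - 2)) ∧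
    (3 * 2 ^ (i - 1) ≤ n → n ≤ 7 * 2 ^ (i - 2) →
      complexity twistedTM (n + 1) = 3 * n + 3 * 2 ^ (i - 2)) ∧
    (7 * 2 ^ (i - 2) ≤ n →
      complexity twistedTM (n + 1) = 2 * n + 5 * 2 ^ (i - 1)) := by
  obtain ⟨j, rfl⟩ : ∃ j, i = j + 2 := ⟨i - 2, by omega⟩
  have ha : 0 < 2 ^ j := by positivity
  simp only [Nat.add_sub_cancel, show j + 2 - 1 = j + 1 by omega, pow_succ] at h1 h2 ⊢
  have h := complexity_twistedTM_succ_eq_min j (n := n) (by omega) (by omega)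
  refine ⟨fun _ ↦ ?_, fun _ _ ↦ ?_, fun _ ↦ ?_⟩ <;> omega

/-- The subword complexity of the twisted Thue–Morse word, for `n ≥ 4`,
with `i ≥ 2` the integer such that `2^i ≤ n ≤ 2^(i+1)`. -/
theorem twistedTM_complexity (n i : ℕ) (hn : 4 ≤ n) (hi : 2 ≤ i)
    (h1 : 2 ^ i ≤ n) (h2 : n ≤ 2 ^ (i + 1)) :
    (n ≤ 3 * 2 ^ (i - 1) →
      complexity twistedTM (n + 1) = 4 * n - 3 * 2 ^ (i - 2)) ∧
    (3 * 2 ^ (i - 1) ≤ n → n ≤ 7 * 2 ^ (i - 2) →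
      complexity twistedTM (n + 1) = 3 * n + 3 * 2 ^ (i - 2)) ∧
    (7 * 2 ^ (i - 2) ≤ n →
      complexity twistedTM (n + 1) = 2 * n + 5 * 2 ^ (i - 1)) :=
  twistedTM_complexity_general n i hi h1 h2
end
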